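/- For partitions α, β in the partition monoid P_n: α R β if and only if dom(α) = dom(β) and ker(α) = ker(β); α L β if and only if codom(α) = codom(β) and coker(α) = coker(β); and α J β if and only if rank(α) = rank(β). -/

import Mathlib

/-!
The blocks of `α * β` are the connected components of the three-row product graph. Such a
component meets the outer rows either inside a single block of `α` or `β`, or through one class of
the equivalence generated on the middle row by `coker α` and `ker β`. This describes the kernel,
cokernel and transversal part of `α * β` explicitly; in particular `ker α ⊆ ker (α * β)`,
`dom (α * β) ⊆ dom α` and `rank (α * β) ≤ min (rank α) (rank β)`, which give the forward
implications.

Conversely, let `γ` have `ker β` on its top row, `ker α` on its bottom row, and transversals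
joining the transversal kernel classes of `β` injectively to those of `α` (possible as soon as
`rank β ≤ rank α`). Then `γ * α` has the domain and kernel of `β`; if moreover `α` and `β` have
the same codomain and cokernel, the classes can be matched through the common bottom blocks and
`γ * α = β`. The `R` case is the mirror image of the `L` case under `α ↦ α*`, and `J` follows by
composing a left factor with a right one.
-/

namespace PM

/-- The points `{1,…,n} ∪ {1',…,n'}`: `Sum.inl` is the top row, `Sum.inr` the bottom row. -/
abbrev Pt (n : ℕ) := Fin n ⊕ Fin n

/-- An element of the partition monoid `P_n`: a set partition of `Pt n`,
encoded as an equivalence relation (setoid). -/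
abbrev Ptn (n : ℕ) := Setoid (Pt n)

/-- Embedding of the first factor (as top and middle layer) into the three-layer set. -/
def iota1 {n : ℕ} : Pt n → (Fin n ⊕ Pt n)
  | Sum.inl i => Sum.inl i
  | Sum.inr i => Sum.inr (Sum.inl i)

/-- Embedding of the second factor (as middle and bottom layer). -/
def iota2 {n : ℕ} : Pt n → (Fin n ⊕ Pt n)
  | Sum.inl i => Sum.inr (Sum.inl i)
  | Sum.inr i => Sum.inr (Sum.inr i)

/-- Embedding of the product (top and bottom layer). -/
def iota3 {n : ℕ} : Pt n → (Fin n ⊕ Pt n)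
  | Sum.inl i => Sum.inl i
  | Sum.inr i => Sum.inr (Sum.inr i)

/-- The edges of the product graph Π(α,β) on the three-layer vertex set. -/
def mulBase {n : ℕ} (α β : Ptn n) (a b : Fin n ⊕ Pt n) : Prop :=
  (∃ x y : Pt n, α.r x y ∧ iota1 x = a ∧ iota1 y = b) ∨
    (∃ x y : Pt n, β.r x y ∧ iota2 x = a ∧ iota2 y = b)

/-- The product in the partition monoid: `x, y` lie in the same block of `α * β`
iff they are connected by a path in the product graph. -/
def pmul {n : ℕ} (α β : Ptn n) : Ptn n :=
  Setoid.comap iota3 (Relation.EqvGen.setoid (mulBase α β))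

/-- The identity partition, with blocks `{i, i'}`. -/
def pone (n : ℕ) : Ptn n := Setoid.ker (Sum.elim id id)

/-- The domain: top points lying in a transversal block. -/
def dom {n : ℕ} (α : Ptn n) : Set (Fin n) := {i | ∃ j, α.r (Sum.inl i) (Sum.inr j)}

/-- The codomain: bottom points lying in a transversal block. -/
def codom {n : ℕ} (α : Ptn n) : Set (Fin n) := {j | ∃ i, α.r (Sum.inl i) (Sum.inr j)}

/-- The kernel: the induced equivalence on the top row. -/
def kerr {n : ℕ} (α : Ptn n) (i j : Fin n) : Prop := α.r (Sum.inl i) (Sum.inl j)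

/-- The cokernel: the induced equivalence on the bottom row. -/
def cokerr {n : ℕ} (α : Ptn n) (i j : Fin n) : Prop := α.r (Sum.inr i) (Sum.inr j)

/-- The rank: the number of transversal blocks, counted via the minimal
top point of each transversal block. -/
noncomputable def rank {n : ℕ} (α : Ptn n) : ℕ :=
  Set.ncard {i : Fin n | i ∈ dom α ∧ ∀ j ∈ dom α, kerr α i j → i ≤ j}

/-- Green's R relation on `P_n` (a monoid, so no extra identity is needed). -/
def PGreenR {n : ℕ} (α β : Ptn n) : Prop :=
  (∃ γ, pmul α γ = β) ∧ ∃ γ, pmul β γ = α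

/-- Green's L relation on `P_n`. -/
def PGreenL {n : ℕ} (α β : Ptn n) : Prop :=
  (∃ γ, pmul γ α = β) ∧ ∃ γ, pmul γ β = α

/-- Green's J relation on `P_n`. -/
def PGreenJ {n : ℕ} (α β : Ptn n) : Prop :=
  (∃ γ δ, pmul (pmul γ α) δ = β) ∧ ∃ γ δ, pmul (pmul γ β) δ = α

/-- The involution `α ↦ α*`, reflecting in the horizontal axis. -/
def star {n : ℕ} (α : Ptn n) : Ptn n := Setoid.comap Sum.swap α

/-- `α̂` : the unique partition of rank 0 with the same kernel and cokernel as `α`: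
it relates two points iff they lie on the same row and are `α`-related. -/
def hat {n : ℕ} (α : Ptn n) : Ptn n where
  r x y := α.r x y ∧ x.isLeft = y.isLeft
  iseqv :=
    ⟨fun x => ⟨α.iseqv.refl x, rfl⟩,
     fun h => ⟨α.iseqv.symm h.1, h.2.symm⟩,
     fun h h' => ⟨α.iseqv.trans h.1 h'.1, h.2.trans h'.2⟩⟩

/-- `α` is a Brauer element: every block has size exactly 2. -/
def IsBrauer {n : ℕ} (α : Ptn n) : Prop :=
  ∀ x : Pt n, ∃ y, y ≠ x ∧ α.r x y ∧ ∀ z, α.r x z → z = x ∨ z = y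

/-- Position of a point in the boundary order `1, …, n, n', …, 1'`. -/
def ordPos {n : ℕ} : Pt n → ℕ
  | Sum.inl i => i.val
  | Sum.inr j => 2 * n - 1 - j.val

/-- `α` is planar: no two of its blocks cross with respect to the boundary order. -/
def IsPlanar {n : ℕ} (α : Ptn n) : Prop :=
  ∀ w x y z : Pt n, ordPos w < ordPos x → ordPos x < ordPos y → ordPos y < ordPos z →
    α.r w y → α.r x z → α.r w x

end PM

namespace PM

variable {n : ℕ} {α β : Ptn n} {i j k l : Fin n} {c : Fin n → Fin n}

theorem rel_iff_rel_of_rel {a b x y : Pt n} (ha : α.r a x) (hb : α.r b y) :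
    α.r a b ↔ α.r x y :=
  ⟨fun h => α.trans' (α.trans' (α.symm' ha) h) hb,
   fun h => α.trans' (α.trans' ha h) (α.symm' hb)⟩

theorem ext_of_kerr_of_cokerr (hker : ∀ i j, kerr α i j ↔ kerr β i j)
    (htr : ∀ i j, α.r (.inl i) (.inr j) ↔ β.r (.inl i) (.inr j))
    (hcoker : ∀ i j, cokerr α i j ↔ cokerr β i j) : α = β := by
  ext (i | i) (j | j)
  · exact hker i j
  · exact htr i j
  · rw [α.comm', β.comm']
    exact htr j i
  · exact hcoker i j

theorem kerr_equivalence (α : Ptn n) : Equivalence (kerr α) :=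
  (α.comap Sum.inl).iseqv

theorem mem_dom_of_kerr (hi : i ∈ dom α) (h : kerr α i j) : j ∈ dom α :=
  let ⟨k, hk⟩ := hi
  ⟨k, α.trans' (α.symm' h) hk⟩

def midEqv (α β : Ptn n) : Fin n → Fin n → Prop :=
  Relation.EqvGen fun k l => cokerr α k l ∨ kerr β k l

theorem midEqv_equivalence (α β : Ptn n) : Equivalence (midEqv α β) :=
  Relation.EqvGen.is_equivalence _

theorem midEqv_of_cokerr (h : cokerr α k l) : midEqv α β k l :=
  .rel _ _ (.inl h)

theorem midEqv_of_kerr (h : kerr β k l) : midEqv α β k l :=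
  .rel _ _ (.inr h)

theorem midEqv_le {E : Fin n → Fin n → Prop} (hE : Equivalence E)
    (hα : ∀ k l, cokerr α k l → E k l) (hβ : ∀ k l, kerr β k l → E k l)
    (h : midEqv α β k l) : E k l :=
  hE.eqvGen_iff.mp (Relation.EqvGen.mono (fun a b hab => hab.elim (hα a b) (hβ a b)) _ _ h)

/-- `Touches α β v k`: the vertex `v` is the middle vertex `k` or is joined to it by one edge. -/
def Touches (α β : Ptn n) : Fin n ⊕ Pt n → Fin n → Prop
  | .inl i, k => α.r (.inl i) (.inr k)
  | .inr (.inl m), k => m = k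
  | .inr (.inr j), k => β.r (.inl k) (.inr j)

def LayerRel (α β : Ptn n) : Fin n ⊕ Pt n → Fin n ⊕ Pt n → Prop
  | .inl i, .inl j => kerr α i j
  | .inr (.inl k), .inr (.inl l) => k = l
  | .inr (.inr i), .inr (.inr j) => cokerr β i j
  | _, _ => False

/-- The connected components of the product graph: a path either stays inside one block of an
outer row, or passes through the middle row. -/
def Linked (α β : Ptn n) (a b : Fin n ⊕ Pt n) : Prop :=
  LayerRel α β a b ∨ ∃ k l, Touches α β a k ∧ midEqv α β k l ∧ Touches α β b l

theorem midEqv_of_touches : ∀ {v : Fin n ⊕ Pt n} {k l : Fin n},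
    Touches α β v k → Touches α β v l → midEqv α β k l
  | .inl _, _, _, hk, hl => midEqv_of_cokerr (α.trans' (α.symm' hk) hl)
  | .inr (.inl _), _, _, rfl, rfl => (midEqv_equivalence α β).refl _
  | .inr (.inr _), _, _, hk, hl => midEqv_of_kerr (β.trans' hk (β.symm' hl))

theorem LayerRel.touches : ∀ {a b : Fin n ⊕ Pt n} {k : Fin n},
    LayerRel α β a b → Touches α β b k → Touches α β a k
  | .inl _, .inl _, _, h, hk => α.trans' h hk
  | .inr (.inl _), .inr (.inl _), _, rfl, hk => hk
  | .inr (.inr _), .inr (.inr _), _, h, hk => β.trans' hk (β.symm' h)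

theorem layerRel_equivalence (α β : Ptn n) : Equivalence (LayerRel α β) where
  refl
    | .inl i => α.refl' _
    | .inr (.inl k) => rfl
    | .inr (.inr j) => β.refl' _
  symm {a b} h := by
    rcases a with i | k | i <;> rcases b with j | l | j <;> try exact h.elim
    exacts [α.symm' h, Eq.symm h, β.symm' h]
  trans {a b c} h h' := by
    rcases a with i | k | i <;> rcases b with j | l | j <;> rcases c with m | m | m <;>
      try first | exact h.elim | exact h'.elim
    exacts [α.trans' h h', h.trans h', β.trans' h h']

theorem linked_equivalence (α β : Ptn n) : Equivalence (Linked α β) where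
  refl a := .inl ((layerRel_equivalence α β).refl a)
  symm
    | .inl h => .inl ((layerRel_equivalence α β).symm h)
    | .inr ⟨k, l, ha, hkl, hb⟩ => .inr ⟨l, k, hb, (midEqv_equivalence α β).symm hkl, ha⟩
  trans
    | .inl h, .inl h' => .inl ((layerRel_equivalence α β).trans h h')
    | .inl h, .inr ⟨k, l, hb, hkl, hc⟩ => .inr ⟨k, l, h.touches hb, hkl, hc⟩
    | .inr ⟨k, l, ha, hkl, hb⟩, .inl h' =>
      .inr ⟨k, l, ha, hkl, ((layerRel_equivalence α β).symm h').touches hb⟩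
    | .inr ⟨k, _, ha, hkl, hb⟩, .inr ⟨_, l', hb', hkl', hc⟩ =>
      have e := midEqv_equivalence α β
      .inr ⟨k, l', ha, e.trans hkl (e.trans (midEqv_of_touches hb hb') hkl'), hc⟩

theorem linked_of_mulBase {a b : Fin n ⊕ Pt n} (h : mulBase α β a b) : Linked α β a b := by
  have e := midEqv_equivalence α β
  rcases h with ⟨x, y, h, rfl, rfl⟩ | ⟨x, y, h, rfl, rfl⟩
  · rcases x with i | k <;> rcases y with j | l
    exacts [.inl h, .inr ⟨l, l, h, e.refl l, rfl⟩, .inr ⟨k, k, rfl, e.refl k, α.symm' h⟩,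
      .inr ⟨k, l, rfl, midEqv_of_cokerr h, rfl⟩]
  · rcases x with k | i <;> rcases y with l | j
    exacts [.inr ⟨k, l, rfl, midEqv_of_kerr h, rfl⟩, .inr ⟨k, k, rfl, e.refl k, h⟩,
      .inr ⟨l, l, β.symm' h, e.refl l, rfl⟩, .inl h]

theorem eqvGen_mulBase_of_left {x y : Pt n} (h : α.r x y) :
    Relation.EqvGen (mulBase α β) (iota1 x) (iota1 y) :=
  .rel _ _ (.inl ⟨x, y, h, rfl, rfl⟩)

theorem eqvGen_mulBase_of_right {x y : Pt n} (h : β.r x y) :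
    Relation.EqvGen (mulBase α β) (iota2 x) (iota2 y) :=
  .rel _ _ (.inr ⟨x, y, h, rfl, rfl⟩)

theorem eqvGen_mulBase_of_midEqv (h : midEqv α β k l) :
    Relation.EqvGen (mulBase α β) (.inr (.inl k)) (.inr (.inl l)) := by
  induction h with
  | rel k l h =>
    rcases h with h | h
    exacts [eqvGen_mulBase_of_left (x := .inr k) (y := .inr l) h,
      eqvGen_mulBase_of_right (x := .inl k) (y := .inl l) h]
  | refl => exact .refl _
  | symm _ _ _ ih => exact .symm _ _ ih
  | trans _ _ _ _ _ ih ih' => exact .trans _ _ _ ih ih'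

theorem eqvGen_mulBase_of_touches : ∀ {v : Fin n ⊕ Pt n} {k : Fin n}, Touches α β v k →
    Relation.EqvGen (mulBase α β) v (.inr (.inl k))
  | .inl i, k, h => eqvGen_mulBase_of_left (x := .inl i) (y := .inr k) h
  | .inr (.inl _), _, rfl => .refl _
  | .inr (.inr j), k, h => .symm _ _ (eqvGen_mulBase_of_right (x := .inl k) (y := .inr j) h)

theorem eqvGen_mulBase_of_layerRel : ∀ {a b : Fin n ⊕ Pt n}, LayerRel α β a b →
    Relation.EqvGen (mulBase α β) a b
  | .inl i, .inl j, h => eqvGen_mulBase_of_left (x := .inl i) (y := .inl j) h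
  | .inr (.inl _), .inr (.inl _), rfl => .refl _
  | .inr (.inr i), .inr (.inr j), h => eqvGen_mulBase_of_right (x := .inr i) (y := .inr j) h

theorem eqvGen_mulBase_iff {a b : Fin n ⊕ Pt n} :
    Relation.EqvGen (mulBase α β) a b ↔ Linked α β a b := by
  refine ⟨fun h => (linked_equivalence α β).eqvGen_iff.mp
    (Relation.EqvGen.mono (fun _ _ => linked_of_mulBase) _ _ h), ?_⟩
  rintro (h | ⟨k, l, ha, hkl, hb⟩)
  · exact eqvGen_mulBase_of_layerRel h
  · exact .trans _ _ _ (eqvGen_mulBase_of_touches ha)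
      (.trans _ _ _ (eqvGen_mulBase_of_midEqv hkl) (.symm _ _ (eqvGen_mulBase_of_touches hb)))

theorem kerr_pmul_iff : kerr (pmul α β) i j ↔
    kerr α i j ∨ ∃ k l, α.r (.inl i) (.inr k) ∧ midEqv α β k l ∧ α.r (.inl j) (.inr l) :=
  eqvGen_mulBase_iff

theorem pmul_inl_inr_iff : (pmul α β).r (.inl i) (.inr j) ↔
    ∃ k l, α.r (.inl i) (.inr k) ∧ midEqv α β k l ∧ β.r (.inl l) (.inr j) :=
  eqvGen_mulBase_iff.trans (or_iff_right id)

theorem cokerr_pmul_iff : cokerr (pmul α β) i j ↔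
    cokerr β i j ∨ ∃ k l, β.r (.inl k) (.inr i) ∧ midEqv α β k l ∧ β.r (.inl l) (.inr j) :=
  eqvGen_mulBase_iff

theorem kerr_pmul_of_kerr (h : kerr α i j) : kerr (pmul α β) i j :=
  kerr_pmul_iff.mpr (.inl h)

theorem cokerr_pmul_of_cokerr (h : cokerr β i j) : cokerr (pmul α β) i j :=
  cokerr_pmul_iff.mpr (.inl h)

theorem dom_pmul_subset : dom (pmul α β) ⊆ dom α := by
  rintro i ⟨j, h⟩
  obtain ⟨k, -, hk, -⟩ := pmul_inl_inr_iff.mp h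
  exact ⟨k, hk⟩

theorem codom_pmul_subset : codom (pmul α β) ⊆ codom β := by
  rintro j ⟨i, h⟩
  obtain ⟨-, l, -, -, hl⟩ := pmul_inl_inr_iff.mp h
  exact ⟨l, hl⟩

theorem star_star (α : Ptn n) : star (star α) = α := by
  ext x y
  change α.r x.swap.swap y.swap.swap ↔ α.r x y
  rw [Sum.swap_swap, Sum.swap_swap]

theorem codom_star (α : Ptn n) : codom (star α) = dom α := by
  ext i
  exact ⟨fun ⟨j, h⟩ => ⟨j, α.symm' h⟩, fun ⟨j, h⟩ => ⟨j, α.symm' h⟩⟩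

def flipLayers : Fin n ⊕ Pt n → Fin n ⊕ Pt n
  | .inl i => .inr (.inr i)
  | .inr (.inl k) => .inr (.inl k)
  | .inr (.inr j) => .inl j

theorem flipLayers_iota3_swap : ∀ x : Pt n, flipLayers (iota3 x.swap) = iota3 x
  | .inl _ => rfl
  | .inr _ => rfl

theorem touches_star_flipLayers :
    ∀ (v : Fin n ⊕ Pt n) (k : Fin n), Touches (star β) (star α) (flipLayers v) k ↔ Touches α β v k
  | .inl _, _ => α.comm'
  | .inr (.inl _), _ => Iff.rfl
  | .inr (.inr _), _ => β.comm'

theorem layerRel_star_flipLayers (a b : Fin n ⊕ Pt n) :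
    LayerRel (star β) (star α) (flipLayers a) (flipLayers b) ↔ LayerRel α β a b := by
  rcases a with _ | _ | _ <;> rcases b with _ | _ | _ <;> exact Iff.rfl

theorem midEqv_star : midEqv (star β) (star α) k l ↔ midEqv α β k l :=
  ⟨Relation.EqvGen.mono (fun _ _ => Or.symm) _ _, Relation.EqvGen.mono (fun _ _ => Or.symm) _ _⟩

theorem linked_star_flipLayers (a b : Fin n ⊕ Pt n) :
    Linked (star β) (star α) (flipLayers a) (flipLayers b) ↔ Linked α β a b := by
  simp only [Linked, layerRel_star_flipLayers, touches_star_flipLayers, midEqv_star]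

theorem star_pmul (α β : Ptn n) : star (pmul α β) = pmul (star β) (star α) := by
  ext x y
  change Relation.EqvGen _ (iota3 x.swap) (iota3 y.swap) ↔ Relation.EqvGen _ (iota3 x) (iota3 y)
  rw [eqvGen_mulBase_iff, eqvGen_mulBase_iff, ← flipLayers_iota3_swap x,
    ← flipLayers_iota3_swap y, linked_star_flipLayers]

open Classical in
/-- The partition carrying `ker β` on its top row and `ker α` on its bottom row, whose
transversal blocks join the `ker β`-class of each `i ∈ dom β` to the `ker α`-class of `c i`. -/
noncomputable def leftFactor (β α : Ptn n) (c : Fin n → Fin n) : Ptn n :=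
  Setoid.ker (β := Quotient (α.comap Sum.inl) ⊕ Quotient (β.comap Sum.inl)) <| Sum.elim
    (fun i => if i ∈ dom β then .inl (Quotient.mk _ (c i)) else .inr (Quotient.mk _ i))
    (fun k => .inl (Quotient.mk _ k))

theorem leftFactor_inl_inr_iff :
    (leftFactor β α c).r (.inl i) (.inr k) ↔ i ∈ dom β ∧ kerr α (c i) k := by
  rw [leftFactor, Setoid.ker_def]
  by_cases hi : i ∈ dom β <;> simp [hi, Quotient.eq, Setoid.comap_rel, kerr]

theorem cokerr_leftFactor_iff :
    cokerr (leftFactor β α c) k l ↔ kerr α k l := by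
  rw [cokerr, leftFactor, Setoid.ker_def]
  simp [Quotient.eq, Setoid.comap_rel, kerr]

theorem kerr_leftFactor_iff
    (hc : ∀ i ∈ dom β, ∀ j ∈ dom β, kerr α (c i) (c j) ↔ kerr β i j) :
    kerr (leftFactor β α c) i j ↔ kerr β i j := by
  rw [kerr, leftFactor, Setoid.ker_def]
  by_cases hi : i ∈ dom β <;> by_cases hj : j ∈ dom β <;>
    simp only [Sum.elim_inl, hi, hj, if_true, if_false, Sum.inl.injEq, Sum.inr.injEq,
      reduceCtorEq, Quotient.eq, Setoid.comap_rel]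
  · exact hc i hi j hj
  · exact ⟨False.elim, fun h => hj (mem_dom_of_kerr hi h)⟩
  · exact ⟨False.elim, fun h => hi (mem_dom_of_kerr hj (β.symm' h))⟩
  · rfl

theorem midEqv_leftFactor_iff :
    midEqv (leftFactor β α c) α k l ↔ kerr α k l :=
  ⟨midEqv_le (kerr_equivalence α) (fun _ _ => cokerr_leftFactor_iff.mp) (fun _ _ => id),
    midEqv_of_kerr⟩

theorem pmul_leftFactor_inl_inr_iff :
    (pmul (leftFactor β α c) α).r (.inl i) (.inr j) ↔ i ∈ dom β ∧ α.r (.inl (c i)) (.inr j) := by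
  rw [pmul_inl_inr_iff]
  constructor
  · rintro ⟨k, l, hk, hkl, hl⟩
    obtain ⟨hi, hik⟩ := leftFactor_inl_inr_iff.mp hk
    exact ⟨hi, α.trans' (α.trans' hik (midEqv_leftFactor_iff.mp hkl)) hl⟩
  · rintro ⟨hi, h⟩
    exact ⟨c i, c i, leftFactor_inl_inr_iff.mpr ⟨hi, α.refl' _⟩,
      midEqv_leftFactor_iff.mpr (α.refl' _), h⟩

theorem kerr_pmul_leftFactor_iff
    (hc : ∀ i ∈ dom β, ∀ j ∈ dom β, kerr α (c i) (c j) ↔ kerr β i j) :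
    kerr (pmul (leftFactor β α c) α) i j ↔ kerr β i j := by
  rw [kerr_pmul_iff, kerr_leftFactor_iff hc, or_iff_left_iff_imp]
  rintro ⟨k, l, hk, hkl, hl⟩
  obtain ⟨hi, hik⟩ := leftFactor_inl_inr_iff.mp hk
  obtain ⟨hj, hjl⟩ := leftFactor_inl_inr_iff.mp hl
  exact (hc i hi j hj).mp (α.trans' (α.trans' hik (midEqv_leftFactor_iff.mp hkl)) (α.symm' hjl))

theorem cokerr_pmul_leftFactor_iff :
    cokerr (pmul (leftFactor β α c) α) i j ↔ cokerr α i j := by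
  rw [cokerr_pmul_iff, or_iff_left_iff_imp]
  rintro ⟨k, l, hk, hkl, hl⟩
  exact (rel_iff_rel_of_rel hk hl).mp (midEqv_leftFactor_iff.mp hkl)

theorem exists_pmul_eq_of_codom_eq (hd : codom α = codom β)
    (hk : ∀ i j, cokerr α i j ↔ cokerr β i j) : ∃ γ, pmul γ α = β := by
  have hlink : ∀ i ∈ dom β, ∃ l j, β.r (.inl i) (.inr j) ∧ α.r (.inl l) (.inr j) := by
    rintro i ⟨j, hj⟩
    obtain ⟨l, hl⟩ : j ∈ codom α := hd ▸ ⟨i, hj⟩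
    exact ⟨l, j, hj, hl⟩
  choose! c j hβ hα using hlink
  have hc : ∀ i ∈ dom β, ∀ i' ∈ dom β, kerr α (c i) (c i') ↔ kerr β i i' := fun i hi i' hi' =>
    (rel_iff_rel_of_rel (hα i hi) (hα i' hi')).trans
      ((hk _ _).trans (rel_iff_rel_of_rel (hβ i hi) (hβ i' hi')).symm)
  have htr : ∀ i j', β.r (.inl i) (.inr j') ↔ i ∈ dom β ∧ α.r (.inl (c i)) (.inr j') := by
    refine fun i j' => ⟨fun h => ?_, fun ⟨hi, h⟩ => ?_⟩
    · have hi : i ∈ dom β := ⟨j', h⟩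
      exact ⟨hi, α.trans' (hα i hi) ((hk _ _).mpr (β.trans' (β.symm' (hβ i hi)) h))⟩
    · exact β.trans' (hβ i hi) ((hk _ _).mp (α.trans' (α.symm' (hα i hi)) h))
  exact ⟨leftFactor β α c, ext_of_kerr_of_cokerr (fun _ _ => kerr_pmul_leftFactor_iff hc)
    (fun _ _ => pmul_leftFactor_inl_inr_iff.trans (htr _ _).symm)
    (fun _ _ => cokerr_pmul_leftFactor_iff.trans (hk _ _))⟩

theorem exists_pmul_eq_of_dom_eq (hd : dom α = dom β) (hk : ∀ i j, kerr α i j ↔ kerr β i j) :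
    ∃ γ, pmul α γ = β := by
  obtain ⟨γ, hγ⟩ := exists_pmul_eq_of_codom_eq (α := star α) (β := star β)
    (by rw [codom_star, codom_star, hd]) hk
  refine ⟨star γ, ?_⟩
  rw [← star_star (pmul α (star γ)), star_pmul, star_star, hγ, star_star]

def minReps (α : Ptn n) : Set (Fin n) := {i | i ∈ dom α ∧ ∀ j ∈ dom α, kerr α i j → i ≤ j}

theorem rank_eq_ncard_minReps (α : Ptn n) : rank α = (minReps α).ncard := rfl

theorem exists_mem_minReps_kerr (hi : i ∈ dom α) : ∃ m ∈ minReps α, kerr α i m := by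
  obtain ⟨m, ⟨hm, him⟩, hmin⟩ := Set.exists_min_image {j | j ∈ dom α ∧ kerr α i j} id
    (Set.toFinite _) ⟨i, hi, α.refl' _⟩
  exact ⟨m, ⟨hm, fun j hj hmj => hmin j ⟨hj, α.trans' him hmj⟩⟩, him⟩

theorem eq_of_mem_minReps (hi : i ∈ minReps α) (hj : j ∈ minReps α) (h : kerr α i j) : i = j :=
  le_antisymm (hi.2 j hj.1 h) (hj.2 i hi.1 (α.symm' h))

theorem rank_le_of_map (f : Fin n → Fin n) (hf : ∀ i ∈ dom α, f i ∈ dom β)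
    (hinj : ∀ i ∈ dom α, ∀ j ∈ dom α, kerr β (f i) (f j) → kerr α i j) : rank α ≤ rank β := by
  choose! m hm hkm using fun i (hi : i ∈ dom β) => exists_mem_minReps_kerr hi
  rw [rank_eq_ncard_minReps, rank_eq_ncard_minReps]
  refine Set.ncard_le_ncard_of_injOn (m ∘ f) (fun i hi => hm _ (hf i hi.1)) ?_
  intro i hi j hj hij
  refine eq_of_mem_minReps hi hj (hinj i hi.1 j hj.1 ?_)
  refine (rel_iff_rel_of_rel (hkm _ (hf i hi.1)) (hkm _ (hf j hj.1))).mpr ?_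
  rw [show m (f i) = m (f j) from hij]

theorem exists_map_of_rank_le (h : rank α ≤ rank β) : ∃ f : Fin n → Fin n,
    (∀ i ∈ dom α, f i ∈ dom β) ∧ ∀ i ∈ dom α, ∀ j ∈ dom α, kerr β (f i) (f j) ↔ kerr α i j := by
  cases isEmpty_or_nonempty (Fin n)
  · exact ⟨id, fun i => isEmptyElim i, fun i => isEmptyElim i⟩
  obtain ⟨g, hg, hginj⟩ := (minReps α).toFinite.exists_injOn_of_encard_le (t := minReps β) (by
    rw [← Set.coe_ncard_eq_encard, ← Set.coe_ncard_eq_encard, ← rank_eq_ncard_minReps,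
      ← rank_eq_ncard_minReps]
    exact_mod_cast h)
  choose! m hm hkm using fun i (hi : i ∈ dom α) => exists_mem_minReps_kerr hi
  refine ⟨g ∘ m, fun i hi => (hg (hm i hi)).1, fun i hi j hj => ?_⟩
  calc kerr β (g (m i)) (g (m j)) ↔ g (m i) = g (m j) :=
        ⟨eq_of_mem_minReps (hg (hm i hi)) (hg (hm j hj)), fun h => h ▸ β.refl' _⟩
    _ ↔ m i = m j := hginj.eq_iff (hm i hi) (hm j hj)
    _ ↔ kerr α (m i) (m j) := ⟨fun h => h ▸ α.refl' _, eq_of_mem_minReps (hm i hi) (hm j hj)⟩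
    _ ↔ kerr α i j := (rel_iff_rel_of_rel (hkm i hi) (hkm j hj)).symm

theorem rank_pmul_le_left : rank (pmul α β) ≤ rank α :=
  rank_le_of_map id (fun _ hi => dom_pmul_subset hi) (fun _ _ _ _ h => kerr_pmul_of_kerr h)

theorem rank_pmul_le_right : rank (pmul α β) ≤ rank β := by
  have hland : ∀ i ∈ dom (pmul α β), ∃ l ∈ dom β, ∃ k, α.r (.inl i) (.inr k) ∧ midEqv α β k l := by
    rintro i ⟨j, hj⟩
    obtain ⟨k, l, hk, hkl, hl⟩ := pmul_inl_inr_iff.mp hj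
    exact ⟨l, ⟨j, hl⟩, k, hk, hkl⟩
  choose! f hf k hk hkf using hland
  have e := midEqv_equivalence α β
  exact rank_le_of_map f hf fun i hi j hj h => kerr_pmul_iff.mpr
    (.inr ⟨k i, k j, hk i hi, e.trans (hkf i hi) (e.trans (midEqv_of_kerr h) (e.symm (hkf j hj))),
      hk j hj⟩)

theorem exists_pmul_dom_kerr_eq_of_rank_le (h : rank β ≤ rank α) :
    ∃ γ, dom (pmul γ α) = dom β ∧ ∀ i j, kerr (pmul γ α) i j ↔ kerr β i j := by
  obtain ⟨c, hdom, hc⟩ := exists_map_of_rank_le h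
  refine ⟨leftFactor β α c, ?_, fun _ _ => kerr_pmul_leftFactor_iff hc⟩
  ext i
  refine ⟨fun ⟨j, hj⟩ => (pmul_leftFactor_inl_inr_iff.mp hj).1, fun hi => ?_⟩
  obtain ⟨j, hj⟩ := hdom i hi
  exact ⟨j, pmul_leftFactor_inl_inr_iff.mpr ⟨hi, hj⟩⟩

theorem greenR_iff : PGreenR α β ↔ dom α = dom β ∧ ∀ i j, kerr α i j ↔ kerr β i j := by
  refine ⟨fun ⟨⟨γ, hγ⟩, ⟨δ, hδ⟩⟩ => ⟨?_, fun i j => ⟨?_, ?_⟩⟩, fun ⟨hd, hk⟩ =>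
    ⟨exists_pmul_eq_of_dom_eq hd hk, exists_pmul_eq_of_dom_eq hd.symm fun i j => (hk i j).symm⟩⟩
  · exact (hδ ▸ dom_pmul_subset : dom α ⊆ dom β).antisymm (hγ ▸ dom_pmul_subset)
  · exact fun h => hγ ▸ kerr_pmul_of_kerr h
  · exact fun h => hδ ▸ kerr_pmul_of_kerr h

theorem greenL_iff : PGreenL α β ↔ codom α = codom β ∧ ∀ i j, cokerr α i j ↔ cokerr β i j := by
  refine ⟨fun ⟨⟨γ, hγ⟩, ⟨δ, hδ⟩⟩ => ⟨?_, fun i j => ⟨?_, ?_⟩⟩, fun ⟨hd, hk⟩ =>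
    ⟨exists_pmul_eq_of_codom_eq hd hk, exists_pmul_eq_of_codom_eq hd.symm fun i j => (hk i j).symm⟩⟩
  · exact (hδ ▸ codom_pmul_subset : codom α ⊆ codom β).antisymm (hγ ▸ codom_pmul_subset)
  · exact fun h => hγ ▸ cokerr_pmul_of_cokerr h
  · exact fun h => hδ ▸ cokerr_pmul_of_cokerr h

theorem exists_pmul_pmul_eq_iff_rank_le : (∃ γ δ, pmul (pmul γ α) δ = β) ↔ rank β ≤ rank α := by
  refine ⟨fun ⟨γ, δ, h⟩ => h ▸ rank_pmul_le_left.trans rank_pmul_le_right, fun h => ?_⟩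
  obtain ⟨γ, hd, hk⟩ := exists_pmul_dom_kerr_eq_of_rank_le h
  obtain ⟨δ, hδ⟩ := exists_pmul_eq_of_dom_eq hd hk
  exact ⟨γ, δ, hδ⟩

theorem greenJ_iff : PGreenJ α β ↔ rank α = rank β := by
  rw [PGreenJ, exists_pmul_pmul_eq_iff_rank_le, exists_pmul_pmul_eq_iff_rank_le, le_antisymm_iff,
    and_comm]

end PM

/-- Green's relations on the partition monoid `P_n`:
`α R β` iff `dom α = dom β` and `ker α = ker β`; `α L β` iff `codom α = codom β` and
`coker α = coker β`; `α J β` iff `rank α = rank β`. -/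
theorem stmt13 (n : ℕ) (α β : PM.Ptn n) :
    (PM.PGreenR α β ↔ (PM.dom α = PM.dom β ∧ ∀ i j : Fin n, PM.kerr α i j ↔ PM.kerr β i j)) ∧
    (PM.PGreenL α β ↔ (PM.codom α = PM.codom β ∧ ∀ i j : Fin n, PM.cokerr α i j ↔ PM.cokerr β i j)) ∧
    (PM.PGreenJ α β ↔ PM.rank α = PM.rank β) := by
  exact ⟨PM.greenR_iff, PM.greenL_iff, PM.greenJ_iff⟩
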